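/- Let X, Y, X' be geometric data sets. Suppose X' ⪯ X (X dominates X') and let π be a coupling of μ_X and μ_Y realizing d_conc, and u : F̄_X → F̄_Y a map satisfying d_KF^π(f ∘ pr₁, u(f) ∘ pr₂) ≤ d_conc(X, Y) for all f ∈ F̄_X. Then there exists a geometric data set Y' with Y' ⪯ Y, #F_{Y'} ≤ #F_{X'}, and d_conc(X', Y') ≤ d_conc(X, Y). -/

import Mathlib

open MeasureTheory Set
open scoped ENNReal

/-!
Take `G = {u (h ∘ φ) | h ∈ F_{X'}}` and couple `X'` with `Y` by pushing `π` forward along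
`φ × id`. The Ky Fan distance between `h ∘ pr₁` and `u (h ∘ φ) ∘ pr₂` under the new coupling is
at most the one between `(h ∘ φ) ∘ pr₁` and `u (h ∘ φ) ∘ pr₂` under `π`, which `u` bounds by
`d_conc(X, Y)`. Since `u (h ∘ φ)` is only a Ky Fan limit of the (1-Lipschitz, hence measurable)
features of `Y`, this comparison is made through measurable approximants.
-/

/-- The Ky Fan (extended) distance between two maps into a pseudo-emetric space. -/
noncomputable def eKyFan {X Y : Type*} [MeasurableSpace X] [PseudoEMetricSpace Y]
    (μ : Measure X) (f g : X → Y) : ℝ≥0∞ :=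
  sInf {ε : ℝ≥0∞ | μ {x | ε < edist (f x) (g x)} ≤ ε}

/-- Hausdorff distance between two families of functions with respect to the
Ky Fan metric. -/
noncomputable def hausKF {X : Type*} [MeasurableSpace X]
    (μ : Measure X) (A B : Set (X → ℝ)) : ℝ≥0∞ :=
  max (⨆ f ∈ A, ⨅ g ∈ B, eKyFan μ f g) (⨆ g ∈ B, ⨅ f ∈ A, eKyFan μ f g)

/-- The closure of a family of functions with respect to the Ky Fan metric. -/
def closKF {X : Type*} [MeasurableSpace X] (μ : Measure X)
    (F : Set (X → ℝ)) : Set (X → ℝ) :=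
  {g | ∀ ε : ℝ≥0∞, 0 < ε → ∃ f ∈ F, eKyFan μ f g < ε}

/-- The observable distance between two (pseudo-)geometric data sets, expressed
as the infimum over couplings of Ky Fan Hausdorff distances of the pulled-back
feature families. -/
noncomputable def dconc {X Y : Type*} [MeasurableSpace X] [MeasurableSpace Y]
    (μX : Measure X) (μY : Measure Y) (FX : Set (X → ℝ)) (FY : Set (Y → ℝ)) : ℝ≥0∞ :=
  ⨅ π ∈ {π : Measure (X × Y) | π.map Prod.fst = μX ∧ π.map Prod.snd = μY},
    hausKF π ((fun f => f ∘ Prod.fst) '' FX) ((fun g => g ∘ Prod.snd) '' FY)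

section KyFan

variable {X Y Z : Type*} [MeasurableSpace X] [MeasurableSpace Y] [PseudoEMetricSpace Z]

lemma eKyFan_le_of_measure_le {μ : Measure X} {f g : X → Z} {ε : ℝ≥0∞}
    (h : μ {x | ε < edist (f x) (g x)} ≤ ε) : eKyFan μ f g ≤ ε :=
  sInf_le h

lemma eKyFan_comm (μ : Measure X) (f g : X → Z) : eKyFan μ f g = eKyFan μ g f := by
  simp only [eKyFan, edist_comm]

lemma eKyFan_triangle (μ : Measure X) (f g k : X → Z) :
    eKyFan μ f k ≤ eKyFan μ f g + eKyFan μ g k := by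
  have key : ∀ a ∈ {ε : ℝ≥0∞ | μ {x | ε < edist (f x) (g x)} ≤ ε},
      ∀ b ∈ {ε : ℝ≥0∞ | μ {x | ε < edist (g x) (k x)} ≤ ε}, eKyFan μ f k ≤ a + b := by
    intro a ha b hb
    refine eKyFan_le_of_measure_le ?_
    have hsub : {x | a + b < edist (f x) (k x)} ⊆
        {x | a < edist (f x) (g x)} ∪ {x | b < edist (g x) (k x)} := by
      intro x hx
      by_contra! hcon
      rw [mem_union, not_or] at hcon
      exact hx.not_ge <|
        (edist_triangle _ _ _).trans (add_le_add (not_lt.1 hcon.1) (not_lt.1 hcon.2))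
    calc μ {x | a + b < edist (f x) (k x)}
        ≤ μ {x | a < edist (f x) (g x)} + μ {x | b < edist (g x) (k x)} :=
          (measure_mono hsub).trans (measure_union_le _ _)
      _ ≤ a + b := add_le_add ha hb
  rw [eKyFan, eKyFan, ENNReal.sInf_add]
  refine le_iInf₂ fun a ha => ?_
  rw [add_comm, eKyFan, ENNReal.sInf_add]
  exact le_iInf₂ fun b hb => (key a ha b hb).trans (add_comm a b).le

lemma eKyFan_comp_le_map (μ : Measure X) {q : X → Y} (hq : AEMeasurable q μ) (f g : Y → Z) :
    eKyFan μ (f ∘ q) (g ∘ q) ≤ eKyFan (μ.map q) f g :=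
  sInf_le_sInf fun _ hε => (Measure.le_map_apply hq _).trans hε

lemma eKyFan_map_le_comp [MeasurableSpace Z] [OpensMeasurableSpace Z] [SecondCountableTopology Z]
    (μ : Measure X) {q : X → Y} (hq : Measurable q) {f g : Y → Z}
    (hf : Measurable f) (hg : Measurable g) :
    eKyFan (μ.map q) f g ≤ eKyFan μ (f ∘ q) (g ∘ q) :=
  sInf_le_sInf fun _ hε =>
    (Measure.map_apply hq (measurableSet_lt measurable_const (hf.edist hg))).trans_le hε

end KyFan

section Closure

variable {W V : Type*} [MeasurableSpace W] [MeasurableSpace V]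

lemma comp_mem_closKF {μ : Measure W} {p : W → V} (hp : AEMeasurable p μ)
    {F : Set (V → ℝ)} {g : V → ℝ} (hg : g ∈ closKF (μ.map p) F) :
    g ∘ p ∈ closKF μ ((· ∘ p) '' F) := by
  intro ε hε
  obtain ⟨f, hf, hfg⟩ := hg ε hε
  exact ⟨f ∘ p, mem_image_of_mem _ hf, (eKyFan_comp_le_map μ hp f g).trans_lt hfg⟩

lemma eKyFan_map_le_of_mem_closKF (μ : Measure W) {q : W → V} (hq : Measurable q)
    {F : Set (V → ℝ)} (hF : ∀ f ∈ F, Measurable f) {a b : V → ℝ} (ha : Measurable a)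
    (hb : b ∈ closKF (μ.map q) F) :
    eKyFan (μ.map q) a b ≤ eKyFan μ (a ∘ q) (b ∘ q) := by
  refine ENNReal.le_of_forall_pos_le_add fun ε hε _ => ?_
  obtain ⟨f, hfF, hfb⟩ := hb (ε / 2) (ENNReal.half_pos (by exact_mod_cast hε.ne'))
  calc eKyFan (μ.map q) a b
      ≤ eKyFan (μ.map q) a f + eKyFan (μ.map q) f b := eKyFan_triangle _ _ _ _
    _ ≤ eKyFan μ (a ∘ q) (f ∘ q) + eKyFan (μ.map q) f b := by
        gcongr; exact eKyFan_map_le_comp μ hq ha (hF f hfF)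
    _ ≤ eKyFan μ (a ∘ q) (b ∘ q) + eKyFan μ (b ∘ q) (f ∘ q) + eKyFan (μ.map q) f b := by
        gcongr; exact eKyFan_triangle _ _ _ _
    _ ≤ eKyFan μ (a ∘ q) (b ∘ q) + eKyFan (μ.map q) f b + eKyFan (μ.map q) f b := by
        gcongr
        rw [eKyFan_comm]
        exact eKyFan_comp_le_map μ hq.aemeasurable f b
    _ ≤ eKyFan μ (a ∘ q) (b ∘ q) + ε := by
        rw [add_assoc]
        gcongr
        exact (add_le_add hfb.le hfb.le).trans (ENNReal.add_halves _).le

end Closure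

lemma lipschitzWith_one_of_edist_eq_iSup {X : Type*} [PseudoEMetricSpace X] {F : Set (X → ℝ)}
    (hd : ∀ x y : X, edist x y = ⨆ f ∈ F, edist (f x) (f y)) {f : X → ℝ} (hf : f ∈ F) :
    LipschitzWith 1 f :=
  LipschitzWith.of_edist_le fun x y =>
    (le_iSup₂ (f := fun f (_ : f ∈ F) => edist (f x) (f y)) f hf).trans (hd x y).ge

section Coupling

variable {X Y X' : Type*} [MeasurableSpace X] [MeasurableSpace Y] [MeasurableSpace X']

lemma map_prodMap_fst {φ : X → X'} (hφ : Measurable φ) (π : Measure (X × Y)) :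
    (π.map (Prod.map φ id)).map Prod.fst = (π.map Prod.fst).map φ := by
  rw [Measure.map_map measurable_fst (hφ.prodMap measurable_id),
    Measure.map_map hφ measurable_fst]
  rfl

lemma map_prodMap_snd {φ : X → X'} (hφ : Measurable φ) (π : Measure (X × Y)) :
    (π.map (Prod.map φ id)).map Prod.snd = π.map Prod.snd := by
  rw [Measure.map_map measurable_snd (hφ.prodMap measurable_id)]
  rfl

lemma dconc_image_le {μ : Measure X} {ν : Measure Y} {F : Set (X → ℝ)}
    {ρ : Measure (X × Y)} (hρ₁ : ρ.map Prod.fst = μ) (hρ₂ : ρ.map Prod.snd = ν)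
    {t : (X → ℝ) → (Y → ℝ)} {c : ℝ≥0∞}
    (ht : ∀ f ∈ F, eKyFan ρ (f ∘ Prod.fst) (t f ∘ Prod.snd) ≤ c) :
    dconc μ ν F (t '' F) ≤ c := by
  refine (iInf₂_le ρ ⟨hρ₁, hρ₂⟩).trans (max_le (iSup₂_le ?_) (iSup₂_le ?_))
  · rintro _ ⟨f, hf, rfl⟩
    exact (iInf₂_le (t f ∘ Prod.snd) ⟨t f, mem_image_of_mem t hf, rfl⟩).trans (ht f hf)
  · rintro _ ⟨_, ⟨f, hf, rfl⟩, rfl⟩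
    exact (iInf₂_le (f ∘ Prod.fst) ⟨f, hf, rfl⟩).trans (ht f hf)

end Coupling

universe u

theorem dominated_dconc_nearby_general {X Y X' : Type u}
    [MeasurableSpace X]
    [MetricSpace Y] [MeasurableSpace Y] [BorelSpace Y]
    [MetricSpace X'] [MeasurableSpace X'] [BorelSpace X']
    (μX : Measure X) (μY : Measure Y) (μX' : Measure X')
    (FX : Set (X → ℝ)) (FY : Set (Y → ℝ)) (FX' : Set (X' → ℝ))
    -- each feature family induces the (extended) metric of its carrier
    (hdY : ∀ x y : Y, edist x y = ⨆ g ∈ FY, edist (g x) (g y))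
    (hdX' : ∀ x y : X', edist x y = ⨆ h ∈ FX', edist (h x) (h y))
    -- X dominates X' via φ
    (φ : X → X') (hφmeas : Measurable φ) (hφpush : μX.map φ = μX')
    (hφfeat : ∀ h ∈ FX', h ∘ φ ∈ closKF μX FX)
    -- a coupling realizing `dconc` and a Ky Fan transfer map `u`
    (π : Measure (X × Y))
    (hπ1 : π.map Prod.fst = μX) (hπ2 : π.map Prod.snd = μY)
    (u : (X → ℝ) → (Y → ℝ))
    (hu : ∀ f ∈ closKF μX FX, u f ∈ closKF μY FY ∧
      eKyFan π (f ∘ Prod.fst) (u f ∘ Prod.snd) ≤ dconc μX μY FX FY) :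
    ∃ G : Set (Y → ℝ), G ⊆ closKF μY FY ∧
      Cardinal.mk G ≤ Cardinal.mk FX' ∧
      dconc μX' μY FX' G ≤ dconc μX μY FX FY := by
  refine ⟨(fun h => u (h ∘ φ)) '' FX',
    image_subset_iff.2 fun h hh => (hu _ (hφfeat h hh)).1, Cardinal.mk_image_le, ?_⟩
  have hπ'₁ : (π.map (Prod.map φ id)).map Prod.fst = μX' := by
    rw [map_prodMap_fst hφmeas, hπ1, hφpush]
  have hπ'₂ : (π.map (Prod.map φ id)).map Prod.snd = μY := by
    rw [map_prodMap_snd hφmeas, hπ2]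
  refine dconc_image_le hπ'₁ hπ'₂ fun h hh => ?_
  obtain ⟨hclosY, hdist⟩ := hu _ (hφfeat h hh)
  have hFY : ∀ f ∈ ((· ∘ Prod.snd) '' FY : Set (X' × Y → ℝ)), Measurable f := by
    rintro _ ⟨g, hg, rfl⟩
    exact (lipschitzWith_one_of_edist_eq_iSup hdY hg).continuous.measurable.comp measurable_snd
  have hhm : Measurable (h ∘ Prod.fst : X' × Y → ℝ) :=
    (lipschitzWith_one_of_edist_eq_iSup hdX' hh).continuous.measurable.comp measurable_fst
  have hclos : u (h ∘ φ) ∘ Prod.snd ∈ closKF (π.map (Prod.map φ id)) ((· ∘ Prod.snd) '' FY) :=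
    comp_mem_closKF measurable_snd.aemeasurable (hπ'₂ ▸ hclosY)
  exact (eKyFan_map_le_of_mem_closKF π (hφmeas.prodMap measurable_id) hFY hhm hclos).trans hdist

theorem dominated_dconc_nearby {X Y X' : Type u}
    [MetricSpace X] [CompleteSpace X] [TopologicalSpace.SeparableSpace X]
    [MeasurableSpace X] [BorelSpace X]
    [MetricSpace Y] [CompleteSpace Y] [TopologicalSpace.SeparableSpace Y]
    [MeasurableSpace Y] [BorelSpace Y]
    [MetricSpace X'] [CompleteSpace X'] [TopologicalSpace.SeparableSpace X']
    [MeasurableSpace X'] [BorelSpace X']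
    (μX : Measure X) (μY : Measure Y) (μX' : Measure X')
    [IsProbabilityMeasure μX] [IsProbabilityMeasure μY] [IsProbabilityMeasure μX']
    (hsX : ∀ U : Set X, IsOpen U → U.Nonempty → 0 < μX U)
    (hsY : ∀ U : Set Y, IsOpen U → U.Nonempty → 0 < μY U)
    (hsX' : ∀ U : Set X', IsOpen U → U.Nonempty → 0 < μX' U)
    (FX : Set (X → ℝ)) (FY : Set (Y → ℝ)) (FX' : Set (X' → ℝ))
    (hFXne : FX.Nonempty) (hFYne : FY.Nonempty) (hFX'ne : FX'.Nonempty)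
    -- each feature family induces the (extended) metric of its carrier
    (hdX : ∀ x y : X, edist x y = ⨆ f ∈ FX, edist (f x) (f y))
    (hdY : ∀ x y : Y, edist x y = ⨆ g ∈ FY, edist (g x) (g y))
    (hdX' : ∀ x y : X', edist x y = ⨆ h ∈ FX', edist (h x) (h y))
    -- X dominates X' via φ
    (φ : X → X') (hφmeas : Measurable φ) (hφpush : μX.map φ = μX')
    (hφfeat : ∀ h ∈ FX', h ∘ φ ∈ closKF μX FX)
    -- a coupling realizing `dconc` and a Ky Fan transfer map `u`
    (π : Measure (X × Y)) [IsProbabilityMeasure π]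
    (hπ1 : π.map Prod.fst = μX) (hπ2 : π.map Prod.snd = μY)
    (hπopt : hausKF π ((fun f => f ∘ Prod.fst) '' FX) ((fun g => g ∘ Prod.snd) '' FY) =
      dconc μX μY FX FY)
    (u : (X → ℝ) → (Y → ℝ))
    (hu : ∀ f ∈ closKF μX FX, u f ∈ closKF μY FY ∧
      eKyFan π (f ∘ Prod.fst) (u f ∘ Prod.snd) ≤ dconc μX μY FX FY) :
    ∃ G : Set (Y → ℝ), G ⊆ closKF μY FY ∧
      Cardinal.mk G ≤ Cardinal.mk FX' ∧
      dconc μX' μY FX' G ≤ dconc μX μY FX FY :=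
  dominated_dconc_nearby_general μX μY μX' FX FY FX' hdY hdX' φ hφmeas hφpush hφfeat π hπ1 hπ2 u hu
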